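/- arXiv:2605.10870 — 5 statements merged into one kernel-verified Lean document; each statement's English description precedes it below -/
import Mathlib

section
/- Memory-state cardinality lower bound: fix ε ≥ 0, let P ⊆ X be a 2ε-packing (d_dec(h,h') > 2ε for all distinct h, h' ∈ P), let M be a finite set of memory states, let κ assign to each h ∈ P a probability mass function κ(h) on M, and let a : M → A be a decision rule such that Δ(h, a(m)) ≤ ε whenever h ∈ P and κ(h)(m) > 0. Then the number of memory states reached with positive probability, |{m ∈ M : ∃ h ∈ P, κ(h)(m) > 0}|, is at least |P|. -/
open Finset
open scoped Classical

/-- The optimal value `μ*(h) = max_{a ∈ A} μ(h,a)`. -/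
noncomputable def mustar {X A : Type*} [Fintype A] [Nonempty A]
    (μ : X → A → ℝ) (h : X) : ℝ :=
  univ.sup' univ_nonempty (μ h)

/-- The suboptimality gap `Δ(h,a) = μ*(h) - μ(h,a)`. -/
noncomputable def gap {X A : Type*} [Fintype A] [Nonempty A]
    (μ : X → A → ℝ) (h : X) (a : A) : ℝ :=
  mustar μ h - μ h a

/-- The pairwise decision distance `d_dec(h,h') = min_a max{Δ(h,a), Δ(h',a)}`. -/
noncomputable def dDec {X A : Type*} [Fintype A] [Nonempty A]
    (μ : X → A → ℝ) (h h' : X) : ℝ :=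
  univ.inf' univ_nonempty (fun a => max (gap μ h a) (gap μ h' a))

/-! Every `h ∈ P` reaches some memory state with positive probability. A state `m` reached by
two histories `h ≠ h'` would make `a m` an `ε`-good action for both, forcing
`d_dec(h, h') ≤ ε ≤ 2ε`, against the packing condition. So each reached state is reached by
at most one element of `P`, and there are at least `|P|` of them. -/

theorem dDec_le_of_gap_le {X A : Type*} [Fintype A] [Nonempty A] {μ : X → A → ℝ}
    {h h' : X} {b : A} {ε : ℝ} (hb : gap μ h b ≤ ε) (hb' : gap μ h' b ≤ ε) :
    dDec μ h h' ≤ ε :=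
  (inf'_le _ (mem_univ b)).trans (max_le hb hb')

theorem exists_pos_of_sum_eq_one {M : Type*} [Fintype M] {p : M → ℝ} (hp : ∑ m, p m = 1) :
    ∃ m, 0 < p m := by
  obtain ⟨m, -, hm⟩ := exists_lt_of_sum_lt (s := univ) (f := 0) (g := p) (by simp [hp])
  exact ⟨m, hm⟩

theorem memory_state_cardinality_lower_bound_general {X A M : Type*}
    [Fintype A] [Nonempty A] [Fintype M]
    (μ : X → A → ℝ)
    (ε : ℝ) (hε : 0 ≤ ε)
    (P : Finset X)
    (hpack : ∀ h ∈ P, ∀ h' ∈ P, h ≠ h' → 2 * ε < dDec μ h h')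
    (κ : X → M → ℝ)
    (hκ1 : ∀ h ∈ P, ∑ m : M, κ h m = 1)
    (a : M → A)
    (hgood : ∀ h ∈ P, ∀ m : M, 0 < κ h m → gap μ h (a m) ≤ ε) :
    P.card ≤ (univ.filter fun m : M => ∃ h ∈ P, 0 < κ h m).card := by
  refine card_le_card_of_forall_subsingleton (fun h m => 0 < κ h m) ?_ ?_
  · intro h hP
    obtain ⟨m, hm⟩ := exists_pos_of_sum_eq_one (hκ1 h hP)
    exact ⟨m, mem_filter.2 ⟨mem_univ m, h, hP, hm⟩, hm⟩
  · rintro m - h ⟨hP, hm⟩ h' ⟨hP', hm'⟩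
    by_contra hne
    have hclose : dDec μ h h' ≤ ε := dDec_le_of_gap_le (hgood h hP m hm) (hgood h' hP' m hm')
    linarith [hpack h hP h' hP' hne]

/-- Memory-state cardinality lower bound: under the hypotheses of support
separation, the number of memory states reached with positive probability is
at least `|P|`. -/
theorem memory_state_cardinality_lower_bound {X A M : Type*}
    [Fintype X] [Nonempty X] [Fintype A] [Nonempty A] [Fintype M]
    (μ : X → A → ℝ) (hμ : ∀ x a, μ x a ∈ Set.Icc (0 : ℝ) 1)
    (ε : ℝ) (hε : 0 ≤ ε)
    (P : Finset X)
    (hpack : ∀ h ∈ P, ∀ h' ∈ P, h ≠ h' → 2 * ε < dDec μ h h')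
    (κ : X → M → ℝ)
    (hκ0 : ∀ h ∈ P, ∀ m : M, 0 ≤ κ h m)
    (hκ1 : ∀ h ∈ P, ∑ m : M, κ h m = 1)
    (a : M → A)
    (hgood : ∀ h ∈ P, ∀ m : M, 0 < κ h m → gap μ h (a m) ≤ ε) :
    P.card ≤ (univ.filter fun m : M => ∃ h ∈ P, 0 < κ h m).card :=
  memory_state_cardinality_lower_bound_general μ ε hε P hpack κ hκ1 a hgood
end

section
/- Set-cover reduction for optimal memory: let U be a nonempty finite universe and S_1, …, S_A ⊆ U a family of subsets whose union is U (every element belongs to at least one set). Define the memory instance with history set X = U, one action a_j per set S_j, and reward μ(u, a_j) = 1 if u ∈ S_j and μ(u, a_j) = 0 otherwise. Then for every integer K ≥ 1 and every ε with 0 ≤ ε < 1: ε*∞(K) ≤ ε holds if and only if there exist indices j_1, …, j_K with S_{j_1} ∪ ⋯ ∪ S_{j_K} = U. -/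
/-! Under the coverage reward every history has optimal value `1`, so the gap of action `a` at
`u` is `0` if `u ∈ S a` and `1` otherwise. As the frontier is attained, `ε*∞(K) ≤ ε < 1`
means some encoder `g` and decision rule `π` send every `u` to a state whose action's set
contains `u`; the `K` sets `S (π i)` then cover `U`, and conversely a cover yields such `g`. -/

open Finset

/-- The worst-case `K`-state distortion frontier `ε*∞(K)`. -/
noncomputable def epsStar {X A : Type*} [Fintype X] [Nonempty X] [Fintype A] [Nonempty A]
    (μ : X → A → ℝ) (K : ℕ) : ℝ :=
  sInf {r : ℝ | ∃ (g : X → Fin K) (π : Fin K → A),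
    r = univ.sup' univ_nonempty (fun h => gap μ h (π (g h)))}

/- The infimum defining `ε*∞(K)` runs over a finite set, nonempty once `K ≥ 1`, so it is
attained. -/
theorem epsStar_le_iff {X A : Type*} [Fintype X] [Nonempty X] [Fintype A] [Nonempty A]
    (μ : X → A → ℝ) (K : ℕ) [NeZero K] (ε : ℝ) :
    epsStar μ K ≤ ε ↔ ∃ (g : X → Fin K) (π : Fin K → A), ∀ h, gap μ h (π (g h)) ≤ ε := by
  set values := {r : ℝ | ∃ (g : X → Fin K) (π : Fin K → A),
    r = univ.sup' univ_nonempty (fun h => gap μ h (π (g h)))}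
  have hfinite : values.Finite :=
    (Set.finite_range fun p : (X → Fin K) × (Fin K → A) =>
      univ.sup' univ_nonempty (fun h => gap μ h (p.2 (p.1 h)))).subset
      fun _ ⟨g, π, hr⟩ => ⟨(g, π), hr.symm⟩
  have hnonempty : values.Nonempty :=
    ⟨_, fun _ => 0, fun _ => Classical.arbitrary A, rfl⟩
  constructor
  · intro hle
    obtain ⟨g, π, hmin⟩ := hnonempty.csInf_mem hfinite
    refine ⟨g, π, fun h => ?_⟩
    exact (le_sup' (fun h => gap μ h (π (g h))) (mem_univ h)).trans (hmin ▸ hle)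
  · rintro ⟨g, π, hgπ⟩
    exact (csInf_le hfinite.bddBelow ⟨g, π, rfl⟩).trans (sup'_le _ _ fun h _ => hgπ h)

section Coverage

variable {U A : Type*} [DecidableEq U] [Fintype A] [Nonempty A] (S : A → Finset U)

theorem mustar_coverage_eq_one {u : U} (hu : ∃ a, u ∈ S a) :
    mustar (fun (u : U) (a : A) => if u ∈ S a then (1 : ℝ) else 0) u = 1 := by
  obtain ⟨a, ha⟩ := hu
  refine le_antisymm (sup'_le _ _ fun b _ => ?_) ?_
  · dsimp only
    split_ifs <;> norm_num
  · have := le_sup' (fun b => if u ∈ S b then (1 : ℝ) else 0) (mem_univ a)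
    rwa [if_pos ha] at this

theorem gap_coverage_le_iff {u : U} (hu : ∃ a, u ∈ S a) (a : A) {ε : ℝ}
    (hε0 : 0 ≤ ε) (hε1 : ε < 1) :
    gap (fun (u : U) (a : A) => if u ∈ S a then (1 : ℝ) else 0) u a ≤ ε ↔ u ∈ S a := by
  rw [gap, mustar_coverage_eq_one S hu]
  split_ifs with h
  · simpa [h] using hε0
  · simpa [h] using hε1

end Coverage

/-- Set-cover reduction for optimal memory: with histories `U`, one action per
set `S a`, and reward `μ(u,a) = 1` iff `u ∈ S a`, for every `K ≥ 1` and
`0 ≤ ε < 1` we have `ε*∞(K) ≤ ε` iff some `K` of the sets cover `U`. -/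
theorem set_cover_reduction {U A : Type*}
    [Fintype U] [Nonempty U] [DecidableEq U] [Fintype A] [Nonempty A]
    (S : A → Finset U) (hcover : ∀ u : U, ∃ a : A, u ∈ S a)
    (K : ℕ) (hK : 1 ≤ K) (ε : ℝ) (hε0 : 0 ≤ ε) (hε1 : ε < 1) :
    epsStar (fun (u : U) (a : A) => if u ∈ S a then (1 : ℝ) else 0) K ≤ ε ↔
      ∃ j : Fin K → A, ∀ u : U, ∃ i : Fin K, u ∈ S (j i) := by
  have : NeZero K := ⟨by omega⟩
  simp only [epsStar_le_iff, gap_coverage_le_iff S (hcover _) _ hε0 hε1]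
  constructor
  · rintro ⟨g, π, hcovered⟩
    exact ⟨π, fun u => ⟨g u, hcovered u⟩⟩
  · rintro ⟨j, hj⟩
    choose g hg using hj
    exact ⟨g, j, hg⟩
end

section
/- Deterministic validity of distance and radius certificates: suppose LCB, UCB : X × A → [0,1] satisfy LCB(x,a) ≤ μ(x,a) ≤ UCB(x,a) for all x ∈ X and a ∈ A. Define UCB*(x) = max_a UCB(x,a), LCB*(x) = max_a LCB(x,a), the upper and lower gap bounds Δ̄(x,a) = UCB*(x) − LCB(x,a) and Δ̲(x,a) = LCB*(x) − UCB(x,a), the pairwise certificates d̄(x,x') = min_a max{Δ̄(x,a), Δ̄(x',a)} and d̲(x,x') = min_a max{Δ̲(x,a), Δ̲(x',a)}, and the cluster certificates ρ̄(C) = min_a max_{x ∈ C} Δ̄(x,a) and ρ̲(C) = min_a max_{x ∈ C} Δ̲(x,a). Then for all x, x' ∈ X and all nonempty C ⊆ X: d̲(x,x') ≤ d_dec(x,x') ≤ d̄(x,x') and ρ̲(C) ≤ ρ_dec(C) ≤ ρ̄(C). -/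
/-!
Sandwiching `μ` between `LCB` and `UCB` sandwiches the optimal values,
`max_a LCB(x,a) ≤ μ*(x) ≤ max_a UCB(x,a)`, and hence the gaps: `Δ̲ ≤ Δ ≤ Δ̄` pointwise.
Decision distances and radii and their certificates are the same min–max expressions
in these gaps, and min and max are monotone.
-/

open Finset

/-- The cluster decision radius `ρ_dec(C) = min_{a} max_{h ∈ C} Δ(h,a)`. -/
noncomputable def rhoDec {X A : Type*} [Fintype A] [Nonempty A]
    (μ : X → A → ℝ) (C : Finset X) (hC : C.Nonempty) : ℝ :=
  univ.inf' univ_nonempty (fun a => C.sup' hC (fun h => gap μ h a))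

/-- Upper gap bound `Δ̄(x,a) = UCB*(x) - LCB(x,a)`. -/
noncomputable def gapUpper {X A : Type*} [Fintype A] [Nonempty A]
    (Lb Ub : X → A → ℝ) (x : X) (a : A) : ℝ :=
  univ.sup' univ_nonempty (Ub x) - Lb x a

/-- Lower gap bound `Δ̲(x,a) = LCB*(x) - UCB(x,a)`. -/
noncomputable def gapLower {X A : Type*} [Fintype A] [Nonempty A]
    (Lb Ub : X → A → ℝ) (x : X) (a : A) : ℝ :=
  univ.sup' univ_nonempty (Lb x) - Ub x a

/-- Upper pairwise certificate `d̄(x,x') = min_a max{Δ̄(x,a), Δ̄(x',a)}`. -/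
noncomputable def dUpper {X A : Type*} [Fintype A] [Nonempty A]
    (Lb Ub : X → A → ℝ) (x x' : X) : ℝ :=
  univ.inf' univ_nonempty (fun a => max (gapUpper Lb Ub x a) (gapUpper Lb Ub x' a))

/-- Lower pairwise certificate `d̲(x,x') = min_a max{Δ̲(x,a), Δ̲(x',a)}`. -/
noncomputable def dLower {X A : Type*} [Fintype A] [Nonempty A]
    (Lb Ub : X → A → ℝ) (x x' : X) : ℝ :=
  univ.inf' univ_nonempty (fun a => max (gapLower Lb Ub x a) (gapLower Lb Ub x' a))

/-- Upper cluster certificate `ρ̄(C) = min_a max_{x ∈ C} Δ̄(x,a)`. -/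
noncomputable def rhoUpper {X A : Type*} [Fintype A] [Nonempty A]
    (Lb Ub : X → A → ℝ) (C : Finset X) (hC : C.Nonempty) : ℝ :=
  univ.inf' univ_nonempty (fun a => C.sup' hC (fun x => gapUpper Lb Ub x a))

/-- Lower cluster certificate `ρ̲(C) = min_a max_{x ∈ C} Δ̲(x,a)`. -/
noncomputable def rhoLower {X A : Type*} [Fintype A] [Nonempty A]
    (Lb Ub : X → A → ℝ) (C : Finset X) (hC : C.Nonempty) : ℝ :=
  univ.inf' univ_nonempty (fun a => C.sup' hC (fun x => gapLower Lb Ub x a))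

section Certificates

variable {X A : Type*} [Fintype A] [Nonempty A] {μ Lb Ub : X → A → ℝ}

theorem gapLower_le_gap (hLμ : ∀ x a, Lb x a ≤ μ x a) (hμU : ∀ x a, μ x a ≤ Ub x a)
    (x : X) (a : A) : gapLower Lb Ub x a ≤ gap μ x a := by
  have hmax : univ.sup' univ_nonempty (Lb x) ≤ mustar μ x := sup'_mono_fun fun b _ => hLμ x b
  unfold gapLower gap
  linarith [hμU x a]

theorem gap_le_gapUpper (hLμ : ∀ x a, Lb x a ≤ μ x a) (hμU : ∀ x a, μ x a ≤ Ub x a)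
    (x : X) (a : A) : gap μ x a ≤ gapUpper Lb Ub x a := by
  have hmax : mustar μ x ≤ univ.sup' univ_nonempty (Ub x) := sup'_mono_fun fun b _ => hμU x b
  unfold gapUpper gap
  linarith [hLμ x a]

theorem dLower_le_dDec (hLμ : ∀ x a, Lb x a ≤ μ x a) (hμU : ∀ x a, μ x a ≤ Ub x a)
    (x x' : X) : dLower Lb Ub x x' ≤ dDec μ x x' :=
  inf'_mono_fun fun a _ =>
    max_le_max (gapLower_le_gap hLμ hμU x a) (gapLower_le_gap hLμ hμU x' a)

theorem dDec_le_dUpper (hLμ : ∀ x a, Lb x a ≤ μ x a) (hμU : ∀ x a, μ x a ≤ Ub x a)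
    (x x' : X) : dDec μ x x' ≤ dUpper Lb Ub x x' :=
  inf'_mono_fun fun a _ =>
    max_le_max (gap_le_gapUpper hLμ hμU x a) (gap_le_gapUpper hLμ hμU x' a)

theorem rhoLower_le_rhoDec (hLμ : ∀ x a, Lb x a ≤ μ x a) (hμU : ∀ x a, μ x a ≤ Ub x a)
    (C : Finset X) (hC : C.Nonempty) : rhoLower Lb Ub C hC ≤ rhoDec μ C hC :=
  inf'_mono_fun fun a _ => sup'_mono_fun fun x _ => gapLower_le_gap hLμ hμU x a

theorem rhoDec_le_rhoUpper (hLμ : ∀ x a, Lb x a ≤ μ x a) (hμU : ∀ x a, μ x a ≤ Ub x a)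
    (C : Finset X) (hC : C.Nonempty) : rhoDec μ C hC ≤ rhoUpper Lb Ub C hC :=
  inf'_mono_fun fun a _ => sup'_mono_fun fun x _ => gap_le_gapUpper hLμ hμU x a

end Certificates

theorem certificate_validity_general {X A : Type*} [Fintype A] [Nonempty A]
    (μ Lb Ub : X → A → ℝ)
    (hLμ : ∀ x a, Lb x a ≤ μ x a) (hμU : ∀ x a, μ x a ≤ Ub x a) :
    (∀ x x' : X,
      dLower Lb Ub x x' ≤ dDec μ x x' ∧ dDec μ x x' ≤ dUpper Lb Ub x x') ∧
    (∀ (C : Finset X) (hC : C.Nonempty),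
      rhoLower Lb Ub C hC ≤ rhoDec μ C hC ∧ rhoDec μ C hC ≤ rhoUpper Lb Ub C hC) :=
  ⟨fun x x' => ⟨dLower_le_dDec hLμ hμU x x', dDec_le_dUpper hLμ hμU x x'⟩,
    fun C hC => ⟨rhoLower_le_rhoDec hLμ hμU C hC, rhoDec_le_rhoUpper hLμ hμU C hC⟩⟩

/-- Deterministic validity of distance and radius certificates: if
`LCB(x,a) ≤ μ(x,a) ≤ UCB(x,a)` pointwise, then the pairwise and cluster
certificates bracket the true decision distance and decision radius. -/
theorem certificate_validity {X A : Type*} [Fintype X] [Fintype A] [Nonempty A]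
    (μ Lb Ub : X → A → ℝ)
    (hL0 : ∀ x a, 0 ≤ Lb x a) (hL1 : ∀ x a, Lb x a ≤ 1)
    (hU0 : ∀ x a, 0 ≤ Ub x a) (hU1 : ∀ x a, Ub x a ≤ 1)
    (hμ : ∀ x a, μ x a ∈ Set.Icc (0 : ℝ) 1)
    (hLμ : ∀ x a, Lb x a ≤ μ x a) (hμU : ∀ x a, μ x a ≤ Ub x a) :
    (∀ x x' : X,
      dLower Lb Ub x x' ≤ dDec μ x x' ∧ dDec μ x x' ≤ dUpper Lb Ub x x') ∧
    (∀ (C : Finset X) (hC : C.Nonempty),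
      rhoLower Lb Ub C hC ≤ rhoDec μ C hC ∧ rhoDec μ C hC ≤ rhoUpper Lb Ub C hC) :=
  certificate_validity_general μ Lb Ub hLμ hμU
end

section
/- Approximation bridge for slot-based memory: let D be a probability mass function on X, and consider a joint distribution of a random context Xᵣ with law D and a random implemented action A_impl taking values in A (A_impl may depend on Xᵣ and extra randomness). Let g* : X → {1,…,K} and a*_1, …, a*_K ∈ A be a comparator satisfying μ*(x) − μ(x, a*_{g*(x)}) ≤ ε̄ for every x ∈ X, and let e : X → {1,…,K} be a router with Pr[e(Xᵣ) ≠ g*(Xᵣ)] ≤ η_route. Assume additionally that either Pr[e(Xᵣ) = g*(Xᵣ)] = 0 or the conditional expectation E[μ(Xᵣ, a*_{g*(Xᵣ)}) − μ(Xᵣ, A_impl) | e(Xᵣ) = g*(Xᵣ)] ≤ η_read with η_read ≥ 0. Then E[μ*(Xᵣ) − μ(Xᵣ, A_impl)] ≤ ε̄ + η_route + η_read. In particular, taking the comparator to be an optimal K-state rule with ε̄ = ε*∞(K) gives E[μ*(Xᵣ) − μ(Xᵣ, A_impl)] ≤ ε*∞(K) + η_route + η_read. -/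
/-!
Write the implemented loss `μ*(x) - μ(x, A_impl)` as the comparator loss `μ*(x) - μ(x, a*_{g*(x)})`,
which is at most `ε̄` pointwise, plus the read-out loss `μ(x, a*_{g*(x)}) - μ(x, A_impl)`. Split the
expected read-out loss along the event that the router agrees with `g*`: off that event the
read-out loss is at most `1` because rewards lie in `[0, 1]`, so it contributes at most `η_route`;
on it, the contribution is the conditional expectation times the probability of agreement, hence
at most `η_read`.
-/

open Finset
open scoped Classical

section WeightedSums

variable {Ω : Type*} {p f : Ω → ℝ}

theorem sum_mul_le_of_forall_le [Fintype Ω] {c : ℝ} (hp0 : ∀ ω, 0 ≤ p ω)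
    (hp1 : ∑ ω, p ω = 1) (hf : ∀ ω, f ω ≤ c) :
    ∑ ω, p ω * f ω ≤ c :=
  calc ∑ ω, p ω * f ω ≤ ∑ ω, p ω * c :=
        sum_le_sum fun ω _ => mul_le_mul_of_nonneg_left (hf ω) (hp0 ω)
    _ = c := by rw [← sum_mul, hp1, one_mul]

theorem sum_mul_le_sum_of_le_one {s : Finset Ω} (hp0 : ∀ ω ∈ s, 0 ≤ p ω)
    (hf : ∀ ω ∈ s, f ω ≤ 1) :
    ∑ ω ∈ s, p ω * f ω ≤ ∑ ω ∈ s, p ω :=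
  sum_le_sum fun ω hω => mul_le_of_le_one_right (hp0 ω hω) (hf ω hω)

theorem sum_mul_le_of_cond_le {s : Finset Ω} {η : ℝ} (hp0 : ∀ ω ∈ s, 0 ≤ p ω)
    (hs : ∑ ω ∈ s, p ω ≤ 1) (hη : 0 ≤ η)
    (hcond : ∑ ω ∈ s, p ω = 0 ∨ (∑ ω ∈ s, p ω * f ω) / ∑ ω ∈ s, p ω ≤ η) :
    ∑ ω ∈ s, p ω * f ω ≤ η := by
  rcases (sum_nonneg hp0).eq_or_lt with hnull | hpos
  · have hzero : ∀ ω ∈ s, p ω = 0 := (sum_eq_zero_iff_of_nonneg hp0).1 hnull.symm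
    rw [sum_eq_zero fun ω hω => by rw [hzero ω hω, zero_mul]]
    exact hη
  · calc ∑ ω ∈ s, p ω * f ω ≤ η * ∑ ω ∈ s, p ω :=
          (div_le_iff₀ hpos).1 (hcond.resolve_left hpos.ne')
      _ ≤ η := mul_le_of_le_one_right hη hs

end WeightedSums

theorem approximation_bridge_general {X A Ω : Type*}
    [Fintype A] [Nonempty A] [Fintype Ω]
    (μ : X → A → ℝ) (hμ : ∀ x a, μ x a ∈ Set.Icc (0 : ℝ) 1)
    (p : Ω → ℝ) (hp0 : ∀ ω, 0 ≤ p ω) (hp1 : ∑ ω : Ω, p ω = 1)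
    (Xr : Ω → X) (Aimpl : Ω → A)
    (K : ℕ) (gstar : X → Fin K) (astar : Fin K → A) (εbar : ℝ)
    (hcomp : ∀ x : X, mustar μ x - μ x (astar (gstar x)) ≤ εbar)
    (e : X → Fin K) (ηroute ηread : ℝ) (hread0 : 0 ≤ ηread)
    (hroute : ∑ ω ∈ univ.filter (fun ω => e (Xr ω) ≠ gstar (Xr ω)), p ω ≤ ηroute)
    (hread :
      (∑ ω ∈ univ.filter (fun ω => e (Xr ω) = gstar (Xr ω)), p ω) = 0 ∨
      (∑ ω ∈ univ.filter (fun ω => e (Xr ω) = gstar (Xr ω)),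
          p ω * (μ (Xr ω) (astar (gstar (Xr ω))) - μ (Xr ω) (Aimpl ω))) /
        (∑ ω ∈ univ.filter (fun ω => e (Xr ω) = gstar (Xr ω)), p ω) ≤ ηread) :
    ∑ ω : Ω, p ω * (mustar μ (Xr ω) - μ (Xr ω) (Aimpl ω))
      ≤ εbar + ηroute + ηread := by
  set readLoss : Ω → ℝ := fun ω => μ (Xr ω) (astar (gstar (Xr ω))) - μ (Xr ω) (Aimpl ω)
  set agree := univ.filter (fun ω => e (Xr ω) = gstar (Xr ω))
  have hsplit : ∑ ω, p ω * (mustar μ (Xr ω) - μ (Xr ω) (Aimpl ω)) =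
      ∑ ω, p ω * (mustar μ (Xr ω) - μ (Xr ω) (astar (gstar (Xr ω)))) +
        (∑ ω ∈ agree, p ω * readLoss ω +
          ∑ ω ∈ univ.filter (fun ω => e (Xr ω) ≠ gstar (Xr ω)), p ω * readLoss ω) := by
    rw [sum_filter_add_sum_filter_not, ← sum_add_distrib]
    exact sum_congr rfl fun ω _ => by ring
  have hcomparator := sum_mul_le_of_forall_le hp0 hp1 fun ω => hcomp (Xr ω)
  have hmisrouted : ∑ ω ∈ univ.filter (fun ω => e (Xr ω) ≠ gstar (Xr ω)), p ω * readLoss ω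
      ≤ ηroute := by
    refine (sum_mul_le_sum_of_le_one (fun ω _ => hp0 ω) fun ω _ => ?_).trans hroute
    linarith [(hμ (Xr ω) (astar (gstar (Xr ω)))).2, (hμ (Xr ω) (Aimpl ω)).1]
  have hagreeMass : ∑ ω ∈ agree, p ω ≤ 1 :=
    hp1 ▸ sum_le_sum_of_subset_of_nonneg (filter_subset _ _) fun ω _ _ => hp0 ω
  have hrouted := sum_mul_le_of_cond_le (fun ω _ => hp0 ω) hagreeMass hread0 hread
  linarith

/-- Approximation bridge for slot-based memory: on a finite probability space
`(Ω, p)` carrying a random context `Xr` with law `D` and an implemented random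
action `Aimpl`, if a comparator `(g*, a*)` has pointwise distortion at most
`ε̄`, the router disagrees with `g*` with probability at most `η_route`, and
either the agreement event is null or the conditional expected extra loss on
agreement is at most `η_read ≥ 0`, then the expected distortion of the
implemented agent is at most `ε̄ + η_route + η_read`. -/
theorem approximation_bridge {X A Ω : Type*}
    [Fintype X] [Nonempty X] [Fintype A] [Nonempty A] [Fintype Ω]
    (μ : X → A → ℝ) (hμ : ∀ x a, μ x a ∈ Set.Icc (0 : ℝ) 1)
    (p : Ω → ℝ) (hp0 : ∀ ω, 0 ≤ p ω) (hp1 : ∑ ω : Ω, p ω = 1)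
    (D : X → ℝ) (Xr : Ω → X) (Aimpl : Ω → A)
    (hlaw : ∀ x : X, ∑ ω ∈ univ.filter (fun ω => Xr ω = x), p ω = D x)
    (K : ℕ) (gstar : X → Fin K) (astar : Fin K → A) (εbar : ℝ)
    (hcomp : ∀ x : X, mustar μ x - μ x (astar (gstar x)) ≤ εbar)
    (e : X → Fin K) (ηroute ηread : ℝ) (hread0 : 0 ≤ ηread)
    (hroute : ∑ ω ∈ univ.filter (fun ω => e (Xr ω) ≠ gstar (Xr ω)), p ω ≤ ηroute)
    (hread :
      (∑ ω ∈ univ.filter (fun ω => e (Xr ω) = gstar (Xr ω)), p ω) = 0 ∨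
      (∑ ω ∈ univ.filter (fun ω => e (Xr ω) = gstar (Xr ω)),
          p ω * (μ (Xr ω) (astar (gstar (Xr ω))) - μ (Xr ω) (Aimpl ω))) /
        (∑ ω ∈ univ.filter (fun ω => e (Xr ω) = gstar (Xr ω)), p ω) ≤ ηread) :
    ∑ ω : Ω, p ω * (mustar μ (Xr ω) - μ (Xr ω) (Aimpl ω))
      ≤ εbar + ηroute + ηread :=
  approximation_bridge_general μ hμ p hp0 hp1 Xr Aimpl K gstar astar εbar hcomp e ηroute ηread
    hread0 hroute hread
end

section
/- Failure of the triangle inequality for the pairwise decision distance: there exist a three-element history set X = {h₁, h₂, h₃}, a two-element action set A = {a₁, a₂}, and a reward function μ : X × A → [0,1] (namely μ(h₁,a₁) = 1, μ(h₁,a₂) = 0, μ(h₂,a₁) = 1, μ(h₂,a₂) = 1, μ(h₃,a₁) = 0, μ(h₃,a₂) = 1) such that d_dec(h₁,h₂) = 0, d_dec(h₂,h₃) = 0, and d_dec(h₁,h₃) = 1; in particular d_dec(h₁,h₃) > d_dec(h₁,h₂) + d_dec(h₂,h₃), so d_dec does not satisfy the triangle inequality. -/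
open Finset

/-! `h₁` and `h₂` share the optimal action `a₁`, and `h₂` and `h₃` share `a₂`, so both distances
vanish; but `h₁` and `h₃` have no common good action: each action earns `0` on one of them,
so every action has gap `1` for `h₁` or for `h₃`. -/

section DecisionDistance

variable {X A : Type*} [Fintype A] [Nonempty A] (μ : X → A → ℝ)

theorem le_mustar (h : X) (a : A) : μ h a ≤ mustar μ h :=
  le_sup' (μ h) (mem_univ a)

variable {μ}

theorem mustar_eq_of_forall_le {h : X} {a : A} (ha : ∀ b, μ h b ≤ μ h a) :
    mustar μ h = μ h a :=
  le_antisymm (sup'_le _ _ fun b _ => ha b) (le_mustar μ h a)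

theorem gap_nonneg (h : X) (a : A) : 0 ≤ gap μ h a :=
  sub_nonneg.2 (le_mustar μ h a)

theorem dDec_le_max_gap (h h' : X) (a : A) : dDec μ h h' ≤ max (gap μ h a) (gap μ h' a) :=
  inf'_le _ (mem_univ a)

theorem dDec_nonneg (h h' : X) : 0 ≤ dDec μ h h' :=
  le_inf' _ _ fun a _ => le_max_of_le_left (gap_nonneg h a)

theorem dDec_eq_zero_of_common_argmax {h h' : X} {a : A} (ha : ∀ b, μ h b ≤ μ h a)
    (ha' : ∀ b, μ h' b ≤ μ h' a) : dDec μ h h' = 0 := by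
  refine le_antisymm ?_ (dDec_nonneg h h')
  calc dDec μ h h' ≤ max (gap μ h a) (gap μ h' a) := dDec_le_max_gap h h' a
    _ = 0 := by simp [gap, mustar_eq_of_forall_le ha, mustar_eq_of_forall_le ha']

theorem gap_eq_one_sub {h : X} (hle : ∀ a, μ h a ≤ 1) (hone : ∃ a, μ h a = 1) (a : A) :
    gap μ h a = 1 - μ h a := by
  obtain ⟨a₀, ha₀⟩ := hone
  rw [gap, mustar_eq_of_forall_le (a := a₀) (ha₀ ▸ hle), ha₀]

theorem dDec_eq_one_of_disjoint_support {h h' : X} (hμ : ∀ a, μ h a ∈ Set.Icc (0 : ℝ) 1)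
    (hμ' : ∀ a, μ h' a ∈ Set.Icc (0 : ℝ) 1) (hone : ∃ a, μ h a = 1) (hone' : ∃ a, μ h' a = 1)
    (hdisj : ∀ a, μ h a = 0 ∨ μ h' a = 0) : dDec μ h h' = 1 := by
  have hgap : ∀ a, gap μ h a = 1 - μ h a := gap_eq_one_sub (fun a => (hμ a).2) hone
  have hgap' : ∀ a, gap μ h' a = 1 - μ h' a := gap_eq_one_sub (fun a => (hμ' a).2) hone'
  obtain ⟨a₀⟩ := ‹Nonempty A›
  refine le_antisymm ((dDec_le_max_gap h h' a₀).trans ?_) (le_inf' _ _ fun a _ => ?_)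
  · rw [hgap, hgap']
    exact max_le (by linarith [(hμ a₀).1]) (by linarith [(hμ' a₀).1])
  · rw [hgap, hgap']
    rcases hdisj a with h0 | h0 <;> simp [h0]

end DecisionDistance

/-- Failure of the triangle inequality for the pairwise decision distance:
on a three-element history set and two actions with the indicated reward matrix,
`d_dec(h₁,h₂) = 0`, `d_dec(h₂,h₃) = 0`, yet `d_dec(h₁,h₃) = 1 >`
`d_dec(h₁,h₂) + d_dec(h₂,h₃)`. -/
theorem dDec_triangle_failure :
    ∃ μ : Fin 3 → Fin 2 → ℝ,
      μ 0 0 = 1 ∧ μ 0 1 = 0 ∧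
      μ 1 0 = 1 ∧ μ 1 1 = 1 ∧
      μ 2 0 = 0 ∧ μ 2 1 = 1 ∧
      (∀ h a, μ h a ∈ Set.Icc (0 : ℝ) 1) ∧
      dDec μ 0 1 = 0 ∧ dDec μ 1 2 = 0 ∧ dDec μ 0 2 = 1 ∧
      dDec μ 0 1 + dDec μ 1 2 < dDec μ 0 2 := by
  let μ : Fin 3 → Fin 2 → ℝ := ![![1, 0], ![1, 1], ![0, 1]]
  have hμ : ∀ h a, μ h a ∈ Set.Icc (0 : ℝ) 1 := by
    intro h a
    fin_cases h <;> fin_cases a <;> norm_num [μ]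
  have h01 : dDec μ 0 1 = 0 :=
    dDec_eq_zero_of_common_argmax (a := 0) (fun b => (hμ 0 b).2) (fun b => (hμ 1 b).2)
  have h12 : dDec μ 1 2 = 0 :=
    dDec_eq_zero_of_common_argmax (a := 1) (fun b => (hμ 1 b).2) (fun b => (hμ 2 b).2)
  have h02 : dDec μ 0 2 = 1 :=
    dDec_eq_one_of_disjoint_support (hμ 0) (hμ 2) ⟨0, rfl⟩ ⟨1, rfl⟩
      (fun a => by fin_cases a <;> simp [μ])
  refine ⟨μ, rfl, rfl, rfl, rfl, rfl, rfl, hμ, h01, h12, h02, ?_⟩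
  rw [h01, h12, h02]
  norm_num
end
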